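/- Let ρ₁₁ = [[3,0,0],[0,4,2],[0,2,3]], ρ₁₂ = [[0,0,0],[0,0,1],[1,−1,0]], ρ₂₂ = [[2,1,−1],[1,6,1],[−1,1,3]], and ϱ₁ = [[ρ₁₁, ρ₁₂],[ρ₁₂†, ρ₂₂]]. Then ρ₁₁, ρ₂₂, ρ₂₂ − ρ₁₂†ρ₁₁⁻¹ρ₁₂, and ρ₂₂ − ρ₁₂ρ₁₁⁻¹ρ₁₂† are all positive definite; hence ϱ₁ is a 2⊗3 PPT state. -/

import Mathlib

open Matrix Kronecker Finset ComplexOrder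

/-- 2x2 block matrix with n×n blocks, indexed by `Fin 2 × n`. -/
def blk {n : Type*} (A B C D : Matrix n n ℂ) :
    Matrix (Fin 2 × n) (Fin 2 × n) ℂ := fun p q =>
  if p.1 = 0 then (if q.1 = 0 then A p.2 q.2 else B p.2 q.2)
  else (if q.1 = 0 then C p.2 q.2 else D p.2 q.2)

/-- Partial transpose on the first (qubit) factor. -/
def ptA {n : Type*} (ρ : Matrix (Fin 2 × n) (Fin 2 × n) ℂ) :
    Matrix (Fin 2 × n) (Fin 2 × n) ℂ := fun p q => ρ (q.1, p.2) (p.1, q.2)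

/-- Separability of an (unnormalized) state on ℂ²⊗ℂⁿ. -/
def SepState {n : Type*} [Fintype n] (ρ : Matrix (Fin 2 × n) (Fin 2 × n) ℂ) : Prop :=
  ∃ (N : ℕ) (σ : Fin N → Matrix (Fin 2) (Fin 2) ℂ) (P : Fin N → Matrix n n ℂ),
    (∀ i, (σ i).PosSemidef) ∧ (∀ i, (P i).PosSemidef) ∧ ρ = ∑ i, σ i ⊗ₖ P i

/-!
Both `ϱ₁` and its partial transpose are 2 × 2 block matrices `[[ρ₁₁, B], [Bᴴ, ρ₂₂]]`, with
`B = ρ₁₂` and `B = ρ₁₂ᴴ` respectively, so by the Schur complement criterion they are positive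
semidefinite as soon as `ρ₁₁` and the corresponding Schur complement `ρ₂₂ - Bᴴ ρ₁₁⁻¹ B` are
positive definite. Each of the concrete 3 × 3 matrices is certified positive definite by an
explicit factorization `Uᴴ D U` with `U` unit upper triangular and `D` diagonal with positive
entries (Gaussian elimination).
-/

section BlockMatrix

variable {n : Type*}

lemma ptA_blk (A B C D : Matrix n n ℂ) : ptA (blk A B C D) = blk A C B D := by
  ext ⟨i, x⟩ ⟨j, y⟩
  fin_cases i <;> fin_cases j <;> rfl

lemma blk_eq_submatrix_fromBlocks (A B C D : Matrix n n ℂ) :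
    blk A B C D = (fromBlocks A B C D).submatrix
      (fun p => if p.1 = 0 then .inl p.2 else .inr p.2)
      (fun p => if p.1 = 0 then .inl p.2 else .inr p.2) := by
  ext ⟨i, x⟩ ⟨j, y⟩
  fin_cases i <;> fin_cases j <;> rfl

variable [Fintype n] [DecidableEq n]

lemma posSemidef_blk {A B D : Matrix n n ℂ} (hA : A.PosDef)
    (hS : (D - Bᴴ * A⁻¹ * B).PosSemidef) : (blk A B Bᴴ D).PosSemidef := by
  have := hA.isUnit.invertible
  rw [blk_eq_submatrix_fromBlocks]
  exact ((hA.fromBlocks₁₁ B D).2 hS).submatrix _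

lemma posSemidef_ptA_blk {A B D : Matrix n n ℂ} (hA : A.PosDef)
    (hS : (D - B * A⁻¹ * Bᴴ).PosSemidef) : (ptA (blk A B Bᴴ D)).PosSemidef := by
  rw [ptA_blk]
  simpa using posSemidef_blk (B := Bᴴ) hA (by rwa [conjTranspose_conjTranspose])

end BlockMatrix

lemma posDef_of_eq_conjTranspose_mul_diagonal_mul {R n : Type*} [Fintype n] [DecidableEq n]
    [CommRing R] [PartialOrder R] [StarRing R] [StarOrderedRing R] [NoZeroDivisors R]
    {M U : Matrix n n R} {d : n → R} (hd : ∀ i, 0 < d i) (hU : IsUnit U.det)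
    (hM : M = Uᴴ * diagonal d * U) : M.PosDef :=
  hM ▸ (PosDef.diagonal hd).conjTranspose_mul_mul_same
    (mulVec_injective_of_isUnit ((isUnit_iff_isUnit_det U).2 hU))

section PPTExample

local notation "R₁₁" => (!![3, 0, 0; 0, 4, 2; 0, 2, 3] : Matrix (Fin 3) (Fin 3) ℂ)
local notation "R₁₂" => (!![0, 0, 0; 0, 0, 1; 1, -1, 0] : Matrix (Fin 3) (Fin 3) ℂ)
local notation "R₂₂" => (!![2, 1, -1; 1, 6, 1; -1, 1, 3] : Matrix (Fin 3) (Fin 3) ℂ)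

lemma inv_R₁₁ : R₁₁⁻¹ = !![1/3, 0, 0; 0, 3/8, -1/4; 0, -1/4, 1/2] := by
  refine inv_eq_right_inv ?_
  ext i j
  fin_cases i <;> fin_cases j <;> simp [mul_apply, Fin.sum_univ_three] <;> norm_num

lemma posDef_R₁₁ : PosDef R₁₁ := by
  refine posDef_of_eq_conjTranspose_mul_diagonal_mul (d := ![3, 4, 2])
    (U := !![1, 0, 0; 0, 1, 1/2; 0, 0, 1]) ?_ (by simp [det_fin_three]) ?_
  · intro i; fin_cases i <;> norm_num
  · ext i j
    fin_cases i <;> fin_cases j <;>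
      simp [mul_apply, Fin.sum_univ_three, conjTranspose_apply, map_ofNat] <;> norm_num

lemma posDef_R₂₂ : PosDef R₂₂ := by
  refine posDef_of_eq_conjTranspose_mul_diagonal_mul (d := ![2, 11/2, 23/11])
    (U := !![1, 1/2, -1/2; 0, 1, 3/11; 0, 0, 1]) ?_ (by simp [det_fin_three]) ?_
  · intro i; fin_cases i <;> norm_num
  · ext i j
    fin_cases i <;> fin_cases j <;>
      simp [mul_apply, Fin.sum_univ_three, conjTranspose_apply, map_ofNat] <;> norm_num

lemma posDef_schur : (R₂₂ - R₁₂ᴴ * R₁₁⁻¹ * R₁₂).PosDef := by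
  refine posDef_of_eq_conjTranspose_mul_diagonal_mul (d := ![3/2, 4, 27/16])
    (U := !![1, 1, -1/2; 0, 1, 3/8; 0, 0, 1]) ?_ (by simp [det_fin_three]) ?_
  · intro i; fin_cases i <;> norm_num
  · rw [inv_R₁₁]
    ext i j
    fin_cases i <;> fin_cases j <;>
      simp [mul_apply, Fin.sum_univ_three, conjTranspose_apply, map_ofNat] <;> norm_num

lemma posDef_schur_conjTranspose : (R₂₂ - R₁₂ * R₁₁⁻¹ * R₁₂ᴴ).PosDef := by
  refine posDef_of_eq_conjTranspose_mul_diagonal_mul (d := ![2, 5, 71/48])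
    (U := !![1, 1/2, -1/2; 0, 1, 1/4; 0, 0, 1]) ?_ (by simp [det_fin_three]) ?_
  · intro i; fin_cases i <;> norm_num
  · rw [inv_R₁₁]
    ext i j
    fin_cases i <;> fin_cases j <;>
      simp [mul_apply, vecMul, dotProduct, Fin.sum_univ_three, conjTranspose_apply, map_ofNat] <;>
      norm_num

end PPTExample

theorem stmt15 (ρ₁₁ ρ₁₂ ρ₂₂ : Matrix (Fin 3) (Fin 3) ℂ)
    (h11 : ρ₁₁ = !![3, 0, 0; 0, 4, 2; 0, 2, 3])
    (h12 : ρ₁₂ = !![0, 0, 0; 0, 0, 1; 1, -1, 0])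
    (h22 : ρ₂₂ = !![2, 1, -1; 1, 6, 1; -1, 1, 3]) :
    ρ₁₁.PosDef ∧ ρ₂₂.PosDef ∧
    (ρ₂₂ - ρ₁₂ᴴ * ρ₁₁⁻¹ * ρ₁₂).PosDef ∧
    (ρ₂₂ - ρ₁₂ * ρ₁₁⁻¹ * ρ₁₂ᴴ).PosDef ∧
    (blk ρ₁₁ ρ₁₂ ρ₁₂ᴴ ρ₂₂).PosSemidef ∧
    (ptA (blk ρ₁₁ ρ₁₂ ρ₁₂ᴴ ρ₂₂)).PosSemidef := by
  subst h11 h12 h22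
  exact ⟨posDef_R₁₁, posDef_R₂₂, posDef_schur, posDef_schur_conjTranspose,
    posSemidef_blk posDef_R₁₁ posDef_schur.posSemidef,
    posSemidef_ptA_blk posDef_R₁₁ posDef_schur_conjTranspose.posSemidef⟩
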